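/- Let K be a commutative ring, σ a finite index type, and W the K-subalgebra of K-linear endomorphisms of K[xᵢ : i ∈ σ] generated by the multiplication operators M_{x_i} (i ∈ σ) and the partial derivative operators P_i = ∂/∂x_i (i ∈ σ). Let S be a multiplicatively closed subset of the polynomial ring K[xᵢ : i ∈ σ]. Then the set {M_s | s ∈ S} satisfies both the left and the right Ore condition in W: for every r ∈ W and s ∈ S there exist t, t' ∈ S and r̃, r̂ ∈ W with M_t ∘ r = r̃ ∘ M_s and r ∘ M_{t'} = M_s ∘ r̂. -/
import Mathlib


/-- Left multiplication by the polynomial `f` on `K[xᵢ : i ∈ σ]`. -/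
noncomputable def Mop (K : Type*) [CommRing K] (σ : Type*) (f : MvPolynomial σ K) :
    Module.End K (MvPolynomial σ K) :=
  LinearMap.mulLeft K f

/-- The partial derivative `∂/∂x_j` on `K[xᵢ : i ∈ σ]`. -/
noncomputable def Pop (K : Type*) [CommRing K] (σ : Type*) (j : σ) :
    Module.End K (MvPolynomial σ K) :=
  (MvPolynomial.pderiv j).toLinearMap

/-- The Weyl algebra realized as a subalgebra of `End_K(K[xᵢ : i ∈ σ])`. -/
noncomputable def WeylOps (K : Type*) [CommRing K] (σ : Type*) :
    Subalgebra K (Module.End K (MvPolynomial σ K)) :=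
  Algebra.adjoin K
    ((Set.range fun i : σ => Mop K σ (MvPolynomial.X i)) ∪
      (Set.range fun i : σ => Pop K σ i))


section aux
variable {K : Type*} [CommRing K] {σ : Type*}

lemma Mop_mul (f g : MvPolynomial σ K) : Mop K σ (f * g) = Mop K σ f * Mop K σ g := by
  ext p
  simp [Mop, mul_assoc]

lemma Mop_mem (f : MvPolynomial σ K) : Mop K σ f ∈ WeylOps K σ := by
  induction f using MvPolynomial.induction_on with
  | C a =>
      have : Mop K σ (MvPolynomial.C a) = algebraMap K _ a := by
        ext p; simp [Mop, Algebra.smul_def, MvPolynomial.algebraMap_eq]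
      rw [this]; exact Subalgebra.algebraMap_mem _ a
  | add p q hp hq =>
      have : Mop K σ (p + q) = Mop K σ p + Mop K σ q := by
        ext x; simp [Mop, add_mul]
      rw [this]; exact add_mem hp hq
  | mul_X p i hp =>
      rw [Mop_mul]
      exact mul_mem hp (Algebra.subset_adjoin (Or.inl ⟨i, rfl⟩))

lemma Pop_Mop (j : σ) (f : MvPolynomial σ K) :
    Pop K σ j * Mop K σ f = Mop K σ f * Pop K σ j + Mop K σ (MvPolynomial.pderiv j f) := by
  ext p
  simp [Pop, Mop, MvPolynomial.pderiv_mul]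
  ring_nf

end aux

section ore
variable {K : Type*} [CommRing K] {σ : Type*}

lemma leftOre {r : Module.End K (MvPolynomial σ K)} (hr : r ∈ WeylOps K σ) :
    ∀ f : MvPolynomial σ K, ∃ n : ℕ, ∃ r₁ ∈ WeylOps K σ,
      Mop K σ (f ^ n) * r = r₁ * Mop K σ f := by
  induction hr using Algebra.adjoin_induction with
  | mem x hx =>
      rcases hx with ⟨i, rfl⟩ | ⟨j, rfl⟩
      · intro f
        exact ⟨1, Mop K σ (MvPolynomial.X i), Mop_mem _, by
          rw [pow_one, ← Mop_mul, ← Mop_mul, mul_comm]⟩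
      · intro f
        refine ⟨2, Mop K σ f * Pop K σ j - Mop K σ (MvPolynomial.pderiv j f),
          sub_mem (mul_mem (Mop_mem f) (Algebra.subset_adjoin (Or.inr ⟨j, rfl⟩))) (Mop_mem _), ?_⟩
        refine LinearMap.ext fun p => ?_
        simp [Mop, Pop, MvPolynomial.pderiv_mul, Module.End.mul_apply, LinearMap.sub_apply,
          LinearMap.add_apply, pow_two]
        ring
  | algebraMap c =>
      intro f
      exact ⟨1, algebraMap K _ c, Subalgebra.algebraMap_mem _ c, by
        rw [pow_one]; exact (Algebra.commutes c (Mop K σ f)).symm⟩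
  | add x y hx hy px py =>
      intro f
      obtain ⟨nx, r1, h1, e1⟩ := px f
      obtain ⟨ny, r2, h2, e2⟩ := py f
      refine ⟨nx + ny, Mop K σ (f ^ ny) * r1 + Mop K σ (f ^ nx) * r2,
        add_mem (mul_mem (Mop_mem _) h1) (mul_mem (Mop_mem _) h2), ?_⟩
      have e1' : Mop K σ (f ^ (nx + ny)) * x = (Mop K σ (f ^ ny) * r1) * Mop K σ f := by
        rw [show f ^ (nx + ny) = f ^ ny * f ^ nx by ring, Mop_mul, mul_assoc, e1, ← mul_assoc]
      have e2' : Mop K σ (f ^ (nx + ny)) * y = (Mop K σ (f ^ nx) * r2) * Mop K σ f := by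
        rw [show f ^ (nx + ny) = f ^ nx * f ^ ny by ring, Mop_mul, mul_assoc, e2, ← mul_assoc]
      rw [mul_add, e1', e2', add_mul]
  | mul x y hx hy px py =>
      intro f
      obtain ⟨m, r2, h2, e2⟩ := py f
      obtain ⟨n, r1, h1, e1⟩ := px (f ^ m)
      refine ⟨m * n, r1 * r2, mul_mem h1 h2, ?_⟩
      rw [pow_mul, ← mul_assoc, e1, mul_assoc, e2, ← mul_assoc]

lemma rightOre {r : Module.End K (MvPolynomial σ K)} (hr : r ∈ WeylOps K σ) :
    ∀ f : MvPolynomial σ K, ∃ n : ℕ, ∃ r₂ ∈ WeylOps K σ,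
      r * Mop K σ (f ^ n) = Mop K σ f * r₂ := by
  induction hr using Algebra.adjoin_induction with
  | mem x hx =>
      rcases hx with ⟨i, rfl⟩ | ⟨j, rfl⟩
      · intro f
        exact ⟨1, Mop K σ (MvPolynomial.X i), Mop_mem _, by
          rw [pow_one, ← Mop_mul, ← Mop_mul, mul_comm]⟩
      · intro f
        refine ⟨2, Pop K σ j * Mop K σ f + Mop K σ (MvPolynomial.pderiv j f),
          add_mem (mul_mem (Algebra.subset_adjoin (Or.inr ⟨j, rfl⟩)) (Mop_mem f)) (Mop_mem _), ?_⟩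
        refine LinearMap.ext fun p => ?_
        simp [Mop, Pop, MvPolynomial.pderiv_mul, Module.End.mul_apply, LinearMap.sub_apply,
          LinearMap.add_apply, pow_two]
        ring
  | algebraMap c =>
      intro f
      exact ⟨1, algebraMap K _ c, Subalgebra.algebraMap_mem _ c, by
        rw [pow_one]; exact Algebra.commutes c (Mop K σ f)⟩
  | add x y hx hy px py =>
      intro f
      obtain ⟨nx, r1, h1, e1⟩ := px f
      obtain ⟨ny, r2, h2, e2⟩ := py f
      refine ⟨nx + ny, r1 * Mop K σ (f ^ ny) + r2 * Mop K σ (f ^ nx),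
        add_mem (mul_mem h1 (Mop_mem _)) (mul_mem h2 (Mop_mem _)), ?_⟩
      have e1' : x * Mop K σ (f ^ (nx + ny)) = Mop K σ f * (r1 * Mop K σ (f ^ ny)) := by
        rw [show f ^ (nx + ny) = f ^ nx * f ^ ny by ring, Mop_mul, ← mul_assoc, e1, mul_assoc]
      have e2' : y * Mop K σ (f ^ (nx + ny)) = Mop K σ f * (r2 * Mop K σ (f ^ nx)) := by
        rw [show f ^ (nx + ny) = f ^ ny * f ^ nx by ring, Mop_mul, ← mul_assoc, e2, mul_assoc]
      rw [add_mul, e1', e2', mul_add]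
  | mul x y hx hy px py =>
      intro f
      obtain ⟨n, r1, h1, e1⟩ := px f
      obtain ⟨m, r2, h2, e2⟩ := py (f ^ n)
      refine ⟨n * m, r1 * r2, mul_mem h1 h2, ?_⟩
      rw [pow_mul, mul_assoc, e2, ← mul_assoc, e1, mul_assoc]

end ore

/-- a multiplicatively closed set `S` of polynomials gives a set
`{M_s | s ∈ S}` satisfying both the left and right Ore conditions in the
Weyl algebra `W`. -/
theorem stmt_18 {K : Type*} [CommRing K] {σ : Type*} [Fintype σ]
    (S : Set (MvPolynomial σ K))
    (hS : (1 : MvPolynomial σ K) ∈ S ∧ (0 : MvPolynomial σ K) ∉ S ∧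
      ∀ s ∈ S, ∀ t ∈ S, s * t ∈ S)
    (r : Module.End K (MvPolynomial σ K)) (hr : r ∈ WeylOps K σ)
    (s : MvPolynomial σ K) (hs : s ∈ S) :
    (∃ t ∈ S, ∃ r₁ ∈ WeylOps K σ, Mop K σ t * r = r₁ * Mop K σ s) ∧
    (∃ t' ∈ S, ∃ r₂ ∈ WeylOps K σ, r * Mop K σ t' = Mop K σ s * r₂) := by
  obtain ⟨h1S, -, hmul⟩ := hS
  have hpow : ∀ n : ℕ, s ^ n ∈ S := by
    intro n
    induction n with
    | zero => simpa using h1S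
    | succ n ih => rw [pow_succ]; exact hmul _ ih _ hs
  constructor
  · obtain ⟨n, r₁, h1, e1⟩ := leftOre hr s
    exact ⟨s ^ n, hpow n, r₁, h1, e1⟩
  · obtain ⟨n, r₂, h2, e2⟩ := rightOre hr s
    exact ⟨s ^ n, hpow n, r₂, h2, e2⟩
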